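/- (Similarity lower bound for the feedforward module.) Let N, D ≥ 1, let R > 1 and R₂ ≥ 0, and let W ∈ ℝ^{D×D} and X, X̃ ∈ ℝ^{N×D} satisfy ‖W‖ ≤ R and ‖X − X̃‖ ≤ R₂ in spectral norm. Set Y = X W and Ỹ = X̃ W, and assume ‖Y‖_F = ‖Ỹ‖_F = 1. Then the cosine similarity satisfies f(Y, Ỹ) = tr[Yᵀ Ỹ] ≥ 1 − (1/2)·R²·R₂²·min{N, D}. -/

import Mathlib

noncomputable def specNorm {m n : ℕ} (A : Matrix (Fin m) (Fin n) ℝ) : ℝ :=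
  ‖LinearMap.toContinuousLinearMap (Matrix.toEuclideanLin A)‖

noncomputable def frobNorm {m n : ℕ} (A : Matrix (Fin m) (Fin n) ℝ) : ℝ :=
  Real.sqrt (∑ i, ∑ j, (A i j) ^ 2)

/-!
Write `Δ = Y - Ỹ = (X - X̃) W`. Polarization gives `2 tr[Yᵀ Ỹ] = ‖Y‖_F² + ‖Ỹ‖_F² - ‖Δ‖_F²`, and
`‖Δ‖_F² ≤ min(N, D) ‖Δ‖² ≤ min(N, D) R₂² R²`, because each column (and each row) of a matrix has
Euclidean norm at most its spectral norm.
-/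

open Matrix
open scoped Matrix.Norms.L2Operator

section SpecNorm

variable {l m n : ℕ}

lemma specNorm_eq_l2_opNorm (A : Matrix (Fin m) (Fin n) ℝ) : specNorm A = ‖A‖ := rfl

lemma specNorm_nonneg (A : Matrix (Fin m) (Fin n) ℝ) : 0 ≤ specNorm A := norm_nonneg _

lemma specNorm_mul_le (A : Matrix (Fin l) (Fin m) ℝ) (B : Matrix (Fin m) (Fin n) ℝ) :
    specNorm (A * B) ≤ specNorm A * specNorm B :=
  l2_opNorm_mul A B

lemma specNorm_transpose (A : Matrix (Fin m) (Fin n) ℝ) : specNorm Aᵀ = specNorm A := by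
  simpa only [specNorm_eq_l2_opNorm, conjTranspose_eq_transpose_of_trivial] using
    l2_opNorm_conjTranspose A

lemma sum_sq_col_le_specNorm_sq (A : Matrix (Fin m) (Fin n) ℝ) (j : Fin n) :
    ∑ i, A i j ^ 2 ≤ specNorm A ^ 2 := by
  have h := l2_opNorm_mulVec A (EuclideanSpace.single j 1)
  rw [PiLp.norm_single, norm_one, mul_one] at h
  calc ∑ i, A i j ^ 2
      = ‖(EuclideanSpace.equiv (Fin m) ℝ).symm (A *ᵥ EuclideanSpace.single j 1)‖ ^ 2 := by
        simp [EuclideanSpace.real_norm_sq_eq]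
    _ ≤ specNorm A ^ 2 := pow_le_pow_left₀ (norm_nonneg _) h 2

end SpecNorm

section FrobNorm

variable {m n : ℕ}

lemma frobNorm_sq (A : Matrix (Fin m) (Fin n) ℝ) : frobNorm A ^ 2 = ∑ i, ∑ j, A i j ^ 2 :=
  Real.sq_sqrt (by positivity)

lemma frobNorm_transpose (A : Matrix (Fin m) (Fin n) ℝ) : frobNorm Aᵀ = frobNorm A := by
  rw [frobNorm, frobNorm, Finset.sum_comm]
  rfl

lemma frobNorm_sq_le_card_mul_specNorm_sq (A : Matrix (Fin m) (Fin n) ℝ) :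
    frobNorm A ^ 2 ≤ n * specNorm A ^ 2 := by
  rw [frobNorm_sq, Finset.sum_comm]
  simpa using Finset.sum_le_sum fun j (_ : j ∈ Finset.univ) => sum_sq_col_le_specNorm_sq A j

lemma frobNorm_sq_le_min_mul_specNorm_sq (A : Matrix (Fin m) (Fin n) ℝ) :
    frobNorm A ^ 2 ≤ min (m : ℝ) n * specNorm A ^ 2 := by
  rcases le_total (m : ℝ) n with h | h
  · simpa only [min_eq_left h, frobNorm_transpose, specNorm_transpose] using
      frobNorm_sq_le_card_mul_specNorm_sq Aᵀ
  · simpa only [min_eq_right h] using frobNorm_sq_le_card_mul_specNorm_sq A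

lemma frobNorm_sq_eq_trace (A : Matrix (Fin m) (Fin n) ℝ) : frobNorm A ^ 2 = trace (Aᵀ * A) := by
  rw [frobNorm_sq, ← vec_dotProduct_vec, dotProduct, Fintype.sum_prod_type, Finset.sum_comm]
  simp only [vec, sq]

lemma two_mul_trace_transpose_mul (Y Z : Matrix (Fin m) (Fin n) ℝ) :
    2 * trace (Yᵀ * Z) = frobNorm Y ^ 2 + frobNorm Z ^ 2 - frobNorm (Y - Z) ^ 2 := by
  rw [frobNorm_sq_eq_trace, frobNorm_sq_eq_trace, frobNorm_sq_eq_trace, transpose_sub,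
    Matrix.sub_mul, Matrix.mul_sub, Matrix.mul_sub, trace_sub, trace_sub, trace_sub, ← trace_transpose (Zᵀ * Y), transpose_mul,
    transpose_transpose]
  ring

end FrobNorm

theorem stmt_11_general (N D : ℕ) (R R₂ : ℝ)
    (W : Matrix (Fin D) (Fin D) ℝ) (X Xt : Matrix (Fin N) (Fin D) ℝ)
    (hW : specNorm W ≤ R) (hdiff : specNorm (X - Xt) ≤ R₂)
    (hY : frobNorm (X * W) = 1) (hYt : frobNorm (Xt * W) = 1) :
    Matrix.trace ((X * W).transpose * (Xt * W)) ≥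
      1 - (1 / 2) * R ^ 2 * R₂ ^ 2 * min (N : ℝ) (D : ℝ) := by
  have hΔ : specNorm (X * W - Xt * W) ≤ R₂ * R := by
    rw [← Matrix.sub_mul]
    exact (specNorm_mul_le _ _).trans <|
      mul_le_mul hdiff hW (specNorm_nonneg W) ((specNorm_nonneg _).trans hdiff)
  have hΔ_sq : specNorm (X * W - Xt * W) ^ 2 ≤ (R₂ * R) ^ 2 :=
    pow_le_pow_left₀ (specNorm_nonneg _) hΔ 2
  have hmin : (0 : ℝ) ≤ min (N : ℝ) D := le_min N.cast_nonneg D.cast_nonneg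
  have hfrob := (frobNorm_sq_le_min_mul_specNorm_sq (X * W - Xt * W)).trans
    (mul_le_mul_of_nonneg_left hΔ_sq hmin)
  have hpol := two_mul_trace_transpose_mul (X * W) (Xt * W)
  rw [hY, hYt] at hpol
  linarith

/-- Similarity lower bound for the feedforward module: if ‖W‖ ≤ R, ‖X − X̃‖ ≤ R₂, and
Y = XW, Ỹ = X̃W have unit Frobenius norm, then tr[Yᵀ Ỹ] ≥ 1 − (1/2)·R²·R₂²·min{N,D}. -/
theorem stmt_11 (N D : ℕ) (hN : 1 ≤ N) (hD : 1 ≤ D) (R R₂ : ℝ) (hR : 1 < R) (hR₂ : 0 ≤ R₂)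
    (W : Matrix (Fin D) (Fin D) ℝ) (X Xt : Matrix (Fin N) (Fin D) ℝ)
    (hW : specNorm W ≤ R) (hdiff : specNorm (X - Xt) ≤ R₂)
    (hY : frobNorm (X * W) = 1) (hYt : frobNorm (Xt * W) = 1) :
    Matrix.trace ((X * W).transpose * (Xt * W)) ≥
      1 - (1 / 2) * R ^ 2 * R₂ ^ 2 * min (N : ℝ) (D : ℝ) :=
  stmt_11_general N D R R₂ W X Xt hW hdiff hY hYt
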